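/- arXiv:1406.6623 — 2 statements merged into one kernel-verified Lean document; each statement's English description precedes it below -/
import Mathlib

section
/- For every metric space X, the topological conformal dimension satisfies dim_tC X ≤ dim_C X. -/
open Metric Set Topology
open scoped ENNReal NNReal

noncomputable section

/-- Hausdorff dimension of a set, with the convention that the empty set has dimension `-1`. -/
def hdim {X : Type*} [EMetricSpace X] (s : Set X) : EReal :=
  open scoped Classical in
  if s.Nonempty then ((dimH s : ℝ≥0∞) : EReal) else -1

/-- Hausdorff dimension of a metric space. -/
def hdimSpace (X : Type*) [EMetricSpace X] : EReal :=
  hdim (Set.univ : Set X)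

/-- A quasisymmetric embedding between metric spaces: a topological embedding `f` together with
a homeomorphism `η` of `[0,∞)` such that `d(x,a) ≤ t·d(x,b)` implies
`d(f x, f a) ≤ η t · d(f x, f b)`. -/
def IsQuasisymmetric {X Y : Type*} [MetricSpace X] [MetricSpace Y] (f : X → Y) : Prop :=
  Topology.IsEmbedding f ∧ ∃ η : ℝ≥0 ≃ₜ ℝ≥0, ∀ (x a b : X) (t : ℝ≥0), 0 < t →
    dist x a ≤ (t : ℝ) * dist x b → dist (f x) (f a) ≤ (η t : ℝ) * dist (f x) (f b)

/-- Conformal dimension: infimum of Hausdorff dimensions of quasisymmetric images. -/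
def conformalDim (X : Type u) [MetricSpace X] : EReal :=
  sInf { c : EReal | ∃ (Y : Type u) (_ : MetricSpace Y) (f : X → Y),
    IsQuasisymmetric f ∧ c = hdim (Set.range f) }

/-- Topological conformal dimension. -/
def tcDim (X : Type u) [MetricSpace X] : EReal :=
  sInf { c : EReal | ∃ 𝒰 : Set (Set X), TopologicalSpace.IsTopologicalBasis 𝒰 ∧
    ∀ U ∈ 𝒰, conformalDim ↥(frontier U) ≤ c - 1 }

/-- Topological Hausdorff dimension. -/
def thDim (X : Type*) [MetricSpace X] : EReal :=
  sInf { c : EReal | ∃ 𝒰 : Set (Set X), TopologicalSpace.IsTopologicalBasis 𝒰 ∧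
    ∀ U ∈ 𝒰, hdim (frontier U) ≤ c - 1 }

end

/-!
Let `f : X → Y` be a quasisymmetric embedding with `dim_H f(X) = c`. The sets
`f⁻¹(B(f x, r))` form a basis of `X`, and the frontier of such a set is mapped into the slice
`f(X) ∩ S(f x, r)`; since `f` restricted to the frontier is still quasisymmetric, it suffices to
find arbitrarily small radii with `dim_H (f(X) ∩ S(f x, r)) ≤ c - 1`. This holds for almost every
`r`, by the slicing argument for the `1`-Lipschitz function `dist (·, f x)`: if `Z` is covered by
sets `E i` with `∑ diam (E i) ^ (t + 1)` small, then the slice of `Z` at level `r` is covered by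
those `E i` whose image contains `r`, and integrating in `r` bounds the `t`-dimensional covering
sums of the slices in `L¹` by `∑ diam (E i) ^ (t + 1)`. Fatou's lemma then shows that
`μH[t + 1] Z = 0` forces `μH[t] (Z ∩ φ⁻¹ {r}) = 0` for almost every `r`.
-/

open MeasureTheory Filter TopologicalSpace

section HausdorffDimension

variable {X : Type*} [EMetricSpace X]

theorem hdim_empty : hdim (∅ : Set X) = -1 := by
  simp [hdim]

theorem hdim_of_nonempty {s : Set X} (hs : s.Nonempty) : hdim s = dimH s := by
  simp [hdim, hs]

theorem neg_one_le_hdim (s : Set X) : -1 ≤ hdim s := by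
  unfold hdim
  split_ifs
  · exact (EReal.coe_ennreal_nonneg _).trans' (by norm_num)
  · rfl

theorem hdim_le_dimH (s : Set X) : hdim s ≤ dimH s := by
  rcases s.eq_empty_or_nonempty with rfl | hs
  · rw [hdim_empty]; exact (EReal.coe_ennreal_nonneg _).trans' (by norm_num)
  · rw [hdim_of_nonempty hs]

theorem hdim_mono {s t : Set X} (h : s ⊆ t) : hdim s ≤ hdim t := by
  rcases s.eq_empty_or_nonempty with rfl | hs
  · exact hdim_empty (X := X) ▸ neg_one_le_hdim t
  · rw [hdim_of_nonempty hs, hdim_of_nonempty (hs.mono h)]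
    exact EReal.coe_ennreal_le_coe_ennreal_iff.2 (dimH_mono h)

end HausdorffDimension

theorem LipschitzWith.lintegral_tsum_indicator_closure_image_le {Y : Type*} [EMetricSpace Y]
    {φ : Y → ℝ} {K : ℝ≥0} (hφ : LipschitzWith K φ) {t : ℝ} (ht : 0 ≤ t) (E : ℕ → Set Y) :
    ∫⁻ r, ∑' i, (closure (φ '' E i)).indicator (fun _ => ediam (E i) ^ t) r ≤
      K * ∑' i, ediam (E i) ^ (t + 1) := by
  have hterm (i : ℕ) :
      ediam (E i) ^ t * volume (closure (φ '' E i)) ≤ K * ediam (E i) ^ (t + 1) := by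
    calc ediam (E i) ^ t * volume (closure (φ '' E i))
        ≤ ediam (E i) ^ t * (K * ediam (E i)) := by
          gcongr
          exact (Real.volume_le_diam _).trans ((ediam_closure _).trans_le (hφ.ediam_image_le _))
      _ = K * ediam (E i) ^ (t + 1) := by
          rw [ENNReal.rpow_add_of_nonneg _ _ ht zero_le_one, ENNReal.rpow_one]; ring
  rw [lintegral_tsum fun i => (measurable_const.indicator
    isClosed_closure.measurableSet).aemeasurable, ← ENNReal.tsum_mul_left]
  simp only [lintegral_indicator_const isClosed_closure.measurableSet]
  exact ENNReal.tsum_le_tsum hterm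

section Slicing

variable {Y : Type*} [EMetricSpace Y] [MeasurableSpace Y] [BorelSpace Y]

theorem exists_cover_of_hausdorffMeasure_eq_zero {d : ℝ} (hd : 0 < d) {s : Set Y}
    (hs : μH[d] s = 0) {δ ε : ℝ≥0∞} (hδ : 0 < δ) (hε : 0 < ε) :
    ∃ E : ℕ → Set Y, s ⊆ ⋃ i, E i ∧ (∀ i, ediam (E i) ≤ δ) ∧ ∑' i, ediam (E i) ^ d < ε := by
  rw [Measure.hausdorffMeasure_apply, ENNReal.iSup_eq_zero] at hs
  have hδs := ENNReal.iSup_eq_zero.1 (hs δ) hδ ▸ hε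
  simp only [iInf_lt_iff] at hδs
  obtain ⟨E, hsE, hEδ, hEε⟩ := hδs
  refine ⟨E, hsE, hEδ, lt_of_le_of_lt (ENNReal.tsum_le_tsum fun i => ?_) hEε⟩
  rcases (E i).eq_empty_or_nonempty with hE | hE
  · simp [hE, ENNReal.zero_rpow_of_pos hd]
  · exact le_iSup_of_le hE le_rfl

theorem LipschitzWith.ae_hausdorffMeasure_inter_preimage_eq_zero {φ : Y → ℝ} {K : ℝ≥0}
    (hφ : LipschitzWith K φ) {t : ℝ} (ht : 0 ≤ t) {Z : Set Y} (hZ : μH[t + 1] Z = 0) :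
    ∀ᵐ r, μH[t] (Z ∩ φ ⁻¹' {r}) = 0 := by
  have hcover (n : ℕ) := exists_cover_of_hausdorffMeasure_eq_zero (by linarith) hZ
    (ENNReal.inv_pos.2 (ENNReal.natCast_ne_top n)) (ENNReal.inv_pos.2 (ENNReal.natCast_ne_top n))
  choose E hZE hEδ hEε using hcover
  set I : ℕ → ℕ → Set ℝ := fun n i => closure (φ '' E n i)
  set g : ℕ → ℝ → ℝ≥0∞ := fun n r => ∑' i, (I n i).indicator (fun _ => ediam (E n i) ^ t) r
  have hg_meas (n : ℕ) : Measurable (g n) :=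
    Measurable.tsum fun i => measurable_const.indicator isClosed_closure.measurableSet
  have hslice (r : ℝ) : μH[t] (Z ∩ φ ⁻¹' {r}) ≤ liminf (fun n => g n r) atTop := by
    -- Indexing by the pieces that meet the slice avoids counting `ediam ∅ ^ 0 = 1`.
    let ι (n : ℕ) := {i : ℕ // (E n i ∩ φ ⁻¹' {r}).Nonempty}
    refine (Measure.hausdorffMeasure_le_liminf_tsum t _ _ ENNReal.tendsto_inv_nat_nhds_zero
      (fun n (i : ι n) => E n i ∩ φ ⁻¹' {r}) (Eventually.of_forall fun n i =>
        (ediam_mono inter_subset_left).trans (hEδ n i)) (Eventually.of_forall fun n => ?_)).trans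
      (liminf_le_liminf (Eventually.of_forall fun n => ?_))
    · rintro z ⟨hz, hzr⟩
      obtain ⟨i, hi⟩ := mem_iUnion.1 (hZE n hz)
      exact mem_iUnion.2 ⟨⟨i, z, hi, hzr⟩, hi, hzr⟩
    · calc ∑' i : ι n, ediam (E n i ∩ φ ⁻¹' {r}) ^ t
          ≤ ∑' i : ι n, (I n i).indicator (fun _ => ediam (E n i) ^ t) r := by
            refine ENNReal.tsum_le_tsum fun ⟨i, z, hz, hzr⟩ => ?_
            have hr : r ∈ I n i := subset_closure ⟨z, hz, hzr⟩
            rw [indicator_of_mem hr]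
            exact ENNReal.rpow_le_rpow (ediam_mono inter_subset_left) ht
        _ ≤ g n r := ENNReal.tsum_comp_le_tsum_of_injective Subtype.val_injective _
  have hg_int (n : ℕ) : ∫⁻ r, g n r ≤ K * (n : ℝ≥0∞)⁻¹ :=
    (hφ.lintegral_tsum_indicator_closure_image_le ht (E n)).trans (by gcongr; exact (hEε n).le)
  have hliminf : ∫⁻ r, liminf (fun n => g n r) atTop = 0 := by
    refine le_antisymm ((lintegral_liminf_le hg_meas).trans ?_) bot_le
    have hlim : Tendsto (fun n : ℕ => (K : ℝ≥0∞) * (n : ℝ≥0∞)⁻¹) atTop (𝓝 0) := by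
      simpa using ENNReal.Tendsto.const_mul ENNReal.tendsto_inv_nat_nhds_zero
        (Or.inr ENNReal.coe_ne_top)
    exact (liminf_le_liminf (Eventually.of_forall hg_int)).trans_eq hlim.liminf_eq
  filter_upwards [(lintegral_eq_zero_iff (Measurable.liminf hg_meas)).1 hliminf] with r hr
  exact le_antisymm ((hslice r).trans_eq hr) bot_le

theorem LipschitzWith.ae_inter_preimage_eq_empty {φ : Y → ℝ} {K : ℝ≥0} (hφ : LipschitzWith K φ)
    {Z : Set Y} (hZ : dimH Z < 1) : ∀ᵐ r, Z ∩ φ ⁻¹' {r} = ∅ := by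
  have hZ1 : μH[0 + 1] Z = 0 := by
    simpa using hausdorffMeasure_of_dimH_lt (d := 1) (by simpa using hZ)
  filter_upwards [hφ.ae_hausdorffMeasure_inter_preimage_eq_zero le_rfl hZ1] with r hr
  by_contra hne
  simpa [hr] using Measure.one_le_hausdorffMeasure_zero_of_nonempty
    (nonempty_iff_ne_empty.2 hne)

theorem LipschitzWith.ae_dimH_inter_preimage_le {φ : Y → ℝ} {K : ℝ≥0} (hφ : LipschitzWith K φ)
    {Z : Set Y} {D : ℝ≥0} (hZ : dimH Z ≤ D + 1) : ∀ᵐ r, dimH (Z ∩ φ ⁻¹' {r}) ≤ D := by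
  have hnull (n : ℕ) : ∀ᵐ r, μH[(D + (n + 1 : ℝ≥0)⁻¹ : ℝ≥0)] (Z ∩ φ ⁻¹' {r}) = 0 := by
    refine hφ.ae_hausdorffMeasure_inter_preimage_eq_zero (by positivity) ?_
    have hlt : dimH Z < ((D + (n + 1 : ℝ≥0)⁻¹ + 1 : ℝ≥0) : ℝ≥0∞) := by
      refine hZ.trans_lt ?_
      rw [add_right_comm]
      exact_mod_cast lt_add_of_pos_right _ (by positivity)
    simpa using hausdorffMeasure_of_dimH_lt hlt
  filter_upwards [ae_all_iff.2 hnull] with r hr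
  refine ENNReal.le_of_forall_pos_le_add fun ε hε _ => ?_
  obtain ⟨n, hn⟩ := exists_nat_one_div_lt hε
  calc dimH (Z ∩ φ ⁻¹' {r}) ≤ ((D + (n + 1 : ℝ≥0)⁻¹ : ℝ≥0) : ℝ≥0∞) :=
        dimH_le_of_hausdorffMeasure_ne_top ((hr n).symm ▸ ENNReal.zero_ne_top)
    _ ≤ D + ε := by
        push_cast
        gcongr
        simpa using hn.le

end Slicing

theorem LipschitzWith.ae_hdim_inter_preimage_le {Y : Type*} [EMetricSpace Y] {φ : Y → ℝ}
    {K : ℝ≥0} (hφ : LipschitzWith K φ) {Z : Set Y} (hZ : Z.Nonempty) :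
    ∀ᵐ r, hdim (Z ∩ φ ⁻¹' {r}) ≤ hdim Z - 1 := by
  borelize Y
  rw [hdim_of_nonempty hZ]
  rcases lt_or_ge (dimH Z) 1 with hZ1 | hZ1
  · filter_upwards [hφ.ae_inter_preimage_eq_empty hZ1] with r hr
    rw [hr, hdim_empty, ← zero_sub]
    exact EReal.sub_le_sub (EReal.coe_ennreal_nonneg _) le_rfl
  rcases eq_or_ne (dimH Z) ⊤ with hZtop | hZtop
  · filter_upwards with r
    rw [hZtop]
    exact le_top.trans_eq (EReal.top_sub_coe 1).symm
  obtain ⟨D, hD⟩ : ∃ D : ℝ≥0, dimH Z = D + 1 :=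
    ⟨(dimH Z - 1).toNNReal, by
      rw [ENNReal.coe_toNNReal (ENNReal.sub_ne_top hZtop), tsub_add_cancel_of_le hZ1]⟩
  filter_upwards [hφ.ae_dimH_inter_preimage_le hD.le] with r hr
  rw [EReal.le_sub_iff_add_le (by simp) (.inl (by decide)), hD]
  calc hdim (Z ∩ φ ⁻¹' {r}) + 1 ≤ (dimH (Z ∩ φ ⁻¹' {r}) : EReal) + 1 := by
        gcongr; exact hdim_le_dimH _
    _ ≤ ((D + 1 : ℝ≥0∞) : EReal) := by
        rw [EReal.coe_ennreal_add, EReal.coe_ennreal_one]; gcongr; exact_mod_cast hr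

theorem exists_mem_Ioo_hdim_inter_sphere_le {Y : Type*} [MetricSpace Y] {Z : Set Y}
    (hZ : Z.Nonempty) (y : Y) {ε : ℝ} (hε : 0 < ε) :
    ∃ r ∈ Ioo 0 ε, hdim (Z ∩ sphere y r) ≤ hdim Z - 1 :=
  Measure.exists_mem_of_measure_ne_zero_of_ae (by simpa using hε)
    (ae_restrict_of_ae ((LipschitzWith.dist_left y).ae_hdim_inter_preimage_le hZ))

section Quasisymmetric

variable {X Y : Type u} [MetricSpace X] [MetricSpace Y] {f : X → Y}

theorem IsQuasisymmetric.restrict (hf : IsQuasisymmetric f) (s : Set X) :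
    IsQuasisymmetric (s.domRestrict f) :=
  ⟨hf.1.comp .subtypeVal, hf.2.imp fun _ hη x a b => hη x a b⟩

theorem IsQuasisymmetric.conformalDim_le (hf : IsQuasisymmetric f) :
    conformalDim X ≤ hdim (range f) :=
  sInf_le ⟨Y, _, f, hf, rfl⟩

theorem IsQuasisymmetric.conformalDim_subtype_le (hf : IsQuasisymmetric f) (s : Set X) :
    conformalDim s ≤ hdim (f '' s) :=
  range_domRestrict f s ▸ (hf.restrict s).conformalDim_le

end Quasisymmetric

/-- For every metric space `X`, `dim_tC X ≤ dim_C X`. -/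
theorem stmt0 (X : Type u) [MetricSpace X] : tcDim X ≤ conformalDim X := by
  refine le_sInf ?_
  rintro _ ⟨Y, _, f, hf, rfl⟩
  refine sInf_le ⟨{U | IsOpen U ∧ conformalDim (frontier U) ≤ hdim (range f) - 1},
    isTopologicalBasis_of_isOpen_of_nhds (fun U hU => hU.1) fun x V hxV hV => ?_,
    fun U hU => hU.2⟩
  obtain ⟨W, hW, rfl⟩ := hf.1.isOpen_iff.1 hV
  obtain ⟨ε, hε, hεW⟩ := Metric.isOpen_iff.1 hW (f x) hxV
  obtain ⟨r, ⟨hr, hrε⟩, hdim_sphere⟩ :=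
    exists_mem_Ioo_hdim_inter_sphere_le ⟨f x, mem_range_self x⟩ (f x) hε
  have hfrontier : f '' frontier (f ⁻¹' ball (f x) r) ⊆ range f ∩ sphere (f x) r :=
    image_subset_iff.2 fun z hz => ⟨mem_range_self z,
      frontier_ball_subset_sphere (hf.1.continuous.frontier_preimage_subset _ hz)⟩
  refine ⟨f ⁻¹' ball (f x) r, ⟨isOpen_ball.preimage hf.1.continuous, ?_⟩, mem_ball_self hr,
    preimage_mono ((ball_subset_ball hrε.le).trans hεW)⟩
  calc conformalDim (frontier (f ⁻¹' ball (f x) r))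
      ≤ hdim (f '' frontier (f ⁻¹' ball (f x) r)) := hf.conformalDim_subtype_le _
    _ ≤ hdim (range f) - 1 := (hdim_mono hfrontier).trans hdim_sphere
end

section
/- If f : X → Y is a surjective quasisymmetric embedding (i.e. a quasisymmetric homeomorphism) between metric spaces, then dim_tC X = dim_tC Y. Consequently, for every quasisymmetric embedding f of a metric space X into a metric space Z, dim_tC X ≤ dim_tH f(X). -/
open Metric Set Topology
open scoped ENNReal NNReal

/-!
Quasisymmetric maps compose and restrict to subspaces, and the inverse of an `η`-quasisymmetric
homeomorphism is quasisymmetric with control function `t ↦ 1 / η⁻¹(1 / t)`. A quasisymmetric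
homeomorphism `f : X → Y` pulls a basis of `Y` back to a basis of `X` whose frontiers map onto the
original frontiers by restrictions of `f`; since conformal dimension can only drop under a
surjective quasisymmetric map, `dim_tC X ≤ dim_tC Y`, and the inverse gives the converse.
For the second claim apply this to `X → f(X)` and note that the identity map bounds the conformal
dimension of each frontier by its Hausdorff dimension.
-/

open Function

namespace NNReal

theorem homeomorph_strictMono (η : ℝ≥0 ≃ₜ ℝ≥0) : StrictMono η := by
  refine (η.continuous.strictMono_of_inj η.injective).resolve_right fun hanti => ?_
  obtain ⟨x, hx⟩ := η.surjective (η 0 + 1)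
  have := hanti.antitone (zero_le : 0 ≤ x)
  rw [hx] at this
  exact (lt_add_one (η 0)).not_ge this

theorem homeomorph_zero (η : ℝ≥0 ≃ₜ ℝ≥0) : η 0 = 0 := by
  obtain ⟨x, hx⟩ := η.surjective 0
  simpa [hx] using (homeomorph_strictMono η).monotone (zero_le : 0 ≤ x)

theorem homeomorph_pos (η : ℝ≥0 ≃ₜ ℝ≥0) {t : ℝ≥0} (ht : 0 < t) : 0 < η t :=
  homeomorph_zero η ▸ homeomorph_strictMono η ht

theorem strictMono_inv_comp_inv {g : ℝ≥0 → ℝ≥0} (hg : StrictMono g) (h0 : g 0 = 0) :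
    StrictMono fun t => (g t⁻¹)⁻¹ := by
  intro a b hab
  have hgb : 0 < g b⁻¹ := h0 ▸ hg (inv_pos.2 ((zero_le : 0 ≤ a).trans_lt hab))
  rcases (zero_le : 0 ≤ a).eq_or_lt with rfl | ha
  · simpa [h0] using hgb
  · exact inv_lt_inv hgb.ne' (hg (inv_lt_inv ha.ne' hab))

end NNReal

/-- The control function of the inverse of an `η`-quasisymmetric map (`0⁻¹ = 0` makes it
fix `0`). -/
noncomputable def qsInverseControl (η : ℝ≥0 ≃ₜ ℝ≥0) : ℝ≥0 ≃ₜ ℝ≥0 :=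
  (StrictMono.orderIsoOfSurjective (fun t => (η.symm t⁻¹)⁻¹)
    (NNReal.strictMono_inv_comp_inv (NNReal.homeomorph_strictMono η.symm)
      (NNReal.homeomorph_zero η.symm))
    fun y => ⟨(η y⁻¹)⁻¹, by simp⟩).toHomeomorph

theorem qsInverseControl_apply (η : ℝ≥0 ≃ₜ ℝ≥0) (t : ℝ≥0) :
    qsInverseControl η t = (η.symm t⁻¹)⁻¹ := rfl

section Quasisymmetric

variable {X Y Z : Type*} [MetricSpace X] [MetricSpace Y] [MetricSpace Z]

/-- `IsQuasisymmetric f` unfolds to `IsEmbedding f ∧ ∃ η, IsQuasisymmetricWith η f`. -/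
def IsQuasisymmetricWith (η : ℝ≥0 ≃ₜ ℝ≥0) (f : X → Y) : Prop :=
  ∀ (x a b : X) (t : ℝ≥0), 0 < t →
    dist x a ≤ (t : ℝ) * dist x b → dist (f x) (f a) ≤ (η t : ℝ) * dist (f x) (f b)

namespace IsQuasisymmetricWith

variable {η : ℝ≥0 ≃ₜ ℝ≥0}

theorem id : IsQuasisymmetricWith (Homeomorph.refl ℝ≥0) (id : X → X) :=
  fun _ _ _ _ _ h => h

theorem comp {η' : ℝ≥0 ≃ₜ ℝ≥0} {g : Y → Z} {f : X → Y}
    (hg : IsQuasisymmetricWith η' g) (hf : IsQuasisymmetricWith η f) :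
    IsQuasisymmetricWith (η.trans η') (g ∘ f) :=
  fun x a b t ht h => hg _ _ _ _ (NNReal.homeomorph_pos η ht) (hf x a b t ht h)

theorem restrictPreimage {f : X → Y} (hf : IsQuasisymmetricWith η f) (s : Set Y) :
    IsQuasisymmetricWith η (s.restrictPreimage f) :=
  fun x a b => hf x a b

theorem codRestrict {f : X → Y} (hf : IsQuasisymmetricWith η f) (s : Set Y)
    (hs : ∀ x, f x ∈ s) : IsQuasisymmetricWith η (s.codRestrict f hs) :=
  fun x a b => hf x a b

theorem symm {e : X ≃ Y} (he : IsQuasisymmetricWith η e) :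
    IsQuasisymmetricWith (qsInverseControl η) e.symm := by
  intro y a b t ht hd
  obtain ⟨x, rfl⟩ := e.surjective y
  obtain ⟨a, rfl⟩ := e.surjective a
  obtain ⟨b, rfl⟩ := e.surjective b
  simp only [Equiv.symm_apply_apply, qsInverseControl_apply] at hd ⊢
  set s₀ := η.symm t⁻¹
  rw [NNReal.coe_inv, ← div_eq_inv_mul,
    le_div_iff₀' (NNReal.coe_pos.2 (NNReal.homeomorph_pos _ (inv_pos.2 ht)))]
  -- If `d(x, b) < s₀ d(x, a)`, quasisymmetry of `e` at a ratio `s < s₀` with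
  -- `d(x, b) ≤ s d(x, a)` gives `d(e x, e a) ≤ t η(s) d(e x, e a)`, where `t η(s) < 1`.
  by_contra! hlt
  have hxa : 0 < dist x a := pos_of_mul_pos_right (dist_nonneg.trans_lt hlt) s₀.2
  have hratio : 0 ≤ dist x b / dist x a := div_nonneg dist_nonneg dist_nonneg
  obtain ⟨s, hbs, hs⟩ := exists_between ((div_lt_iff₀ hxa).2 hlt)
  lift s to ℝ≥0 using hratio.trans hbs.le
  have hηs : ((η s * t : ℝ≥0) : ℝ) < 1 := by
    refine NNReal.coe_lt_one.2 ((NNReal.lt_inv_iff_mul_lt ht.ne').1 ?_)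
    rw [← η.apply_symm_apply t⁻¹]
    exact NNReal.homeomorph_strictMono η (NNReal.coe_lt_coe.1 hs)
  have hba := he x b a s (hratio.trans_lt hbs) ((div_lt_iff₀ hxa).1 hbs).le
  have hexa : 0 < dist (e x) (e a) := dist_pos.2 (e.injective.ne (dist_pos.1 hxa))
  have : dist (e x) (e a) < dist (e x) (e a) := calc
    dist (e x) (e a) ≤ t * dist (e x) (e b) := hd
    _ ≤ t * (η s * dist (e x) (e a)) := by gcongr
    _ = (η s * t : ℝ≥0) * dist (e x) (e a) := by push_cast; ring
    _ < 1 * dist (e x) (e a) := by gcongr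
    _ = dist (e x) (e a) := one_mul _
  exact lt_irrefl _ this

end IsQuasisymmetricWith

namespace IsQuasisymmetric

theorem id : IsQuasisymmetric (id : X → X) :=
  ⟨.id, _, IsQuasisymmetricWith.id⟩

theorem comp {g : Y → Z} {f : X → Y} (hg : IsQuasisymmetric g) (hf : IsQuasisymmetric f) :
    IsQuasisymmetric (g ∘ f) :=
  let ⟨hge, _, hgη⟩ := hg
  let ⟨hfe, _, hfη⟩ := hf
  ⟨hge.comp hfe, _, IsQuasisymmetricWith.comp hgη hfη⟩

theorem restrictPreimage {f : X → Y} (hf : IsQuasisymmetric f) (s : Set Y) :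
    IsQuasisymmetric (s.restrictPreimage f) :=
  let ⟨hfe, _, hfη⟩ := hf
  ⟨hfe.restrictPreimage s, _, IsQuasisymmetricWith.restrictPreimage hfη s⟩

theorem codRestrict {f : X → Y} (hf : IsQuasisymmetric f) (s : Set Y) (hs : ∀ x, f x ∈ s) :
    IsQuasisymmetric (s.codRestrict f hs) :=
  let ⟨hfe, _, hfη⟩ := hf
  ⟨hfe.codRestrict s hs, _, IsQuasisymmetricWith.codRestrict hfη s hs⟩

theorem symm {e : X ≃ Y} (he : IsQuasisymmetric e) : IsQuasisymmetric e.symm :=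
  let ⟨hee, _, heη⟩ := he
  ⟨(e.toHomeomorphOfIsInducing hee.isInducing).symm.isEmbedding, _,
    IsQuasisymmetricWith.symm heη⟩

end IsQuasisymmetric

end Quasisymmetric

section Dimension

theorem hdimSpace_coe {X : Type*} [MetricSpace X] (s : Set X) : hdimSpace s = hdim s := by
  have hdimH : dimH (univ : Set s) = dimH s := by
    rw [← isometry_subtype_coe.dimH_image, Subtype.coe_image_univ]
  have hne : (univ : Set s).Nonempty ↔ s.Nonempty :=
    nonempty_iff_univ_nonempty.symm.trans nonempty_coe_sort
  unfold hdimSpace hdim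
  rw [hdimH]
  split_ifs <;> tauto

variable {X Y : Type u} [MetricSpace X] [MetricSpace Y]

theorem conformalDim_le_hdimSpace : conformalDim X ≤ hdimSpace X :=
  sInf_le ⟨X, _, id, .id, by rw [range_id]; rfl⟩

theorem conformalDim_le_of_surjective {f : X → Y} (hf : IsQuasisymmetric f)
    (hs : Surjective f) : conformalDim X ≤ conformalDim Y := by
  refine sInf_le_sInf ?_
  rintro c ⟨W, _, g, hg, rfl⟩
  exact ⟨W, _, g ∘ f, hg.comp hf, by rw [range_comp, hs.range_eq, image_univ]⟩

theorem tcDim_le_of_surjective {f : X → Y} (hf : IsQuasisymmetric f) (hs : Surjective f) :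
    tcDim X ≤ tcDim Y := by
  have hopen : IsOpenMap f := hf.1.isInducing.isOpenMap (hs.range_eq ▸ isOpen_univ)
  refine sInf_le_sInf ?_
  rintro c ⟨𝒰, h𝒰, hc⟩
  refine ⟨preimage f '' 𝒰, h𝒰.isInducing hf.1.isInducing, ?_⟩
  rintro _ ⟨U, hU, rfl⟩
  rw [← hopen.preimage_frontier_eq_frontier_preimage hf.1.continuous]
  exact (conformalDim_le_of_surjective (hf.restrictPreimage _)
    (restrictPreimage_surjective _ hs)).trans (hc U hU)

theorem tcDim_le_thDim : tcDim X ≤ thDim X := by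
  refine sInf_le_sInf ?_
  rintro c ⟨𝒰, h𝒰, hc⟩
  exact ⟨𝒰, h𝒰, fun U hU =>
    (conformalDim_le_hdimSpace.trans_eq (hdimSpace_coe _)).trans (hc U hU)⟩

theorem tcDim_eq_of_surjective {f : X → Y} (hf : IsQuasisymmetric f) (hs : Surjective f) :
    tcDim X = tcDim Y :=
  let e := Equiv.ofBijective f ⟨hf.1.injective, hs⟩
  le_antisymm (tcDim_le_of_surjective hf hs)
    (tcDim_le_of_surjective (IsQuasisymmetric.symm (e := e) hf) e.symm.surjective)

theorem tcDim_le_thDim_range {Z : Type u} [MetricSpace Z] {f : X → Z} (hf : IsQuasisymmetric f) :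
    tcDim X ≤ thDim (range f) :=
  (tcDim_eq_of_surjective (hf.codRestrict _ mem_range_self) rangeFactorization_surjective).trans_le
    tcDim_le_thDim

end Dimension

/-- Topological conformal dimension is invariant under quasisymmetric homeomorphisms, and
consequently `dim_tC X ≤ dim_tH f(X)` for every quasisymmetric embedding `f` of `X`. -/
theorem stmt2 :
    (∀ (X Y : Type u) (_ : MetricSpace X) (_ : MetricSpace Y) (f : X → Y),
      IsQuasisymmetric f → Function.Surjective f → tcDim X = tcDim Y) ∧
    (∀ (X Z : Type u) (_ : MetricSpace X) (_ : MetricSpace Z) (f : X → Z),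
      IsQuasisymmetric f → tcDim X ≤ thDim ↥(Set.range f)) :=
  ⟨fun _ _ _ _ _ hf hs => tcDim_eq_of_surjective hf hs,
    fun _ _ _ _ _ hf => tcDim_le_thDim_range hf⟩
end
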